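/- arXiv:2510.02820 — 4 statements merged into one kernel-verified Lean document; each statement's English description precedes it below -/
import Mathlib

section
/- As T → ∞, (1/√T) · ∫_0^∞ (1 + y/√T)^T · e^{-y√T} · √T dy converges to √(2π)/2; equivalently, ∫_0^∞ (1 + y/√T)^T e^{-y√T} dy → ∫_0^∞ e^{-y²/2} dy = √(2π)/2. -/
open MeasureTheory Filter

/-- `log (1+t) ≤ (t² + 2t)/(2(1+t))` for `t ≥ 0`. -/
lemma my_log_le (t : ℝ) (ht : 0 ≤ t) :
    Real.log (1 + t) ≤ (t ^ 2 + 2 * t) / (2 * (1 + t)) := by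
  rcases eq_or_lt_of_le ht with h | h
  · simp [← h]
  · have h1 : (1 : ℝ) < 1 + t := by linarith
    have hl : 0 < Real.log (1 + t) := Real.log_pos h1
    have hsinh := Real.self_lt_sinh_iff.mpr hl
    have hsinh_eq : Real.sinh (Real.log (1 + t)) = ((1 + t) - (1 + t)⁻¹) / 2 := by
      rw [Real.sinh_eq, Real.exp_log (by linarith), Real.exp_neg, Real.exp_log (by linarith)]
    have heq : ((1 + t) - (1 + t)⁻¹) / 2 = (t ^ 2 + 2 * t) / (2 * (1 + t)) := by
      field_simp
      ring
    rw [hsinh_eq, heq] at hsinh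
    linarith

/-- Domination: for `T ≥ 1` and `y > 0`. -/
lemma my_bound (T : ℕ) (hT : 1 ≤ T) (y : ℝ) (hy : 0 < y) :
    (1 + y / Real.sqrt T) ^ T * Real.exp (-(y * Real.sqrt T)) ≤ Real.exp ((1 - y) / 2) := by
  set s : ℝ := Real.sqrt T with hs_def
  have hs1 : 1 ≤ s := by
    rw [hs_def]
    rw [show (1:ℝ) = Real.sqrt 1 by simp]
    exact Real.sqrt_le_sqrt (by exact_mod_cast hT)
  have hs0 : 0 < s := by linarith
  have hsq : s ^ 2 = (T : ℝ) := Real.sq_sqrt (by positivity)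
  set x : ℝ := y / s with hx_def
  have hx0 : 0 < x := div_pos hy hs0
  have hxs : x * s = y := div_mul_cancel₀ y hs0.ne'
  have h1x : 0 < 1 + x := by linarith
  have hpow : (1 + x) ^ T = Real.exp ((T : ℝ) * Real.log (1 + x)) := by
    rw [← Real.exp_log h1x, ← Real.exp_nat_mul, Real.exp_log h1x]
  rw [hpow, ← Real.exp_add, Real.exp_le_exp]
  have hlog := my_log_le x hx0.le
  have hmul : (T : ℝ) * Real.log (1 + x) ≤ (T : ℝ) * ((x ^ 2 + 2 * x) / (2 * (1 + x))) :=
    mul_le_mul_of_nonneg_left hlog (by positivity)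
  have key : (T : ℝ) * ((x ^ 2 + 2 * x) / (2 * (1 + x))) + -(y * s) ≤ (1 - y) / 2 := by
    rw [← hsq, ← hxs, ← sub_nonneg]
    have heq : (1 - x * s) / 2 - (s ^ 2 * ((x ^ 2 + 2 * x) / (2 * (1 + x))) + -(x * s * s))
        = ((x * s - x) * (x * s - 1) + 1) / (2 * (1 + x)) := by
      field_simp
      ring
    rw [heq]
    have hP : 0 ≤ (x * s - x) * (x * s - 1) + 1 := by
      rcases le_or_gt (x * s) 1 with hc | hc
      · nlinarith [mul_nonneg hx0.le (sub_nonneg.2 hs1)]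
      · nlinarith [mul_nonneg hx0.le (sub_nonneg.2 hs1)]
    positivity
  linarith

/-- Pointwise limit. -/
lemma my_ptlim (y : ℝ) (hy : 0 < y) :
    Tendsto (fun T : ℕ => (1 + y / Real.sqrt T) ^ T * Real.exp (-(y * Real.sqrt T)))
      atTop (nhds (Real.exp (-(y ^ 2 / 2)))) := by
  have hsqrt : Tendsto (fun T : ℕ => Real.sqrt T) atTop atTop := by
    apply tendsto_atTop.2
    intro b
    filter_upwards [eventually_ge_atTop (⌈b ^ 2⌉₊)] with T hT
    calc b ≤ Real.sqrt (b ^ 2) := by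
            rw [Real.sqrt_sq_eq_abs]; exact le_abs_self b
      _ ≤ Real.sqrt T := Real.sqrt_le_sqrt ((Nat.le_ceil _).trans (by exact_mod_cast hT))
  -- the exponent
  set E : ℕ → ℝ := fun T => (T : ℝ) * Real.log (1 + y / Real.sqrt T) - y * Real.sqrt T with hE
  have hEtendsto : Tendsto E atTop (nhds (-(y ^ 2 / 2))) := by
    have h0 : Tendsto (fun T : ℕ => E T + y ^ 2 / 2) atTop (nhds 0) := by
      refine squeeze_zero_norm' (a := fun T : ℕ => 2 * y ^ 3 / Real.sqrt T) ?_ ?_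
      · have hev : ∀ᶠ T : ℕ in atTop, 2 * y ≤ Real.sqrt T := hsqrt.eventually_ge_atTop (2 * y)
        filter_upwards [hev, hsqrt.eventually_ge_atTop 1] with T hT hT1
        have hs0 : 0 < Real.sqrt T := by linarith
        set s : ℝ := Real.sqrt T
        set x : ℝ := y / s with hx_def
        have hx0 : 0 < x := div_pos hy hs0
        have hx_half : x ≤ 1 / 2 := by
          rw [hx_def, div_le_div_iff₀ hs0 (by norm_num)]
          linarith
        have hxs : x * s = y := div_mul_cancel₀ y hs0.ne'
        have hsq : s ^ 2 = (T : ℝ) := Real.sq_sqrt (by positivity)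
        have habs : |(-x)| < 1 := by rw [abs_neg, abs_of_pos hx0]; linarith
        have htaylor := Real.abs_log_sub_add_sum_range_le habs 2
        simp only [Finset.sum_range_succ, Finset.sum_range_zero] at htaylor
        rw [abs_neg, abs_of_pos hx0] at htaylor
        have htaylor' : |Real.log (1 + x) - x + x ^ 2 / 2| ≤ x ^ 3 / (1 - x) := by
          have e1 : (0 : ℝ) + (-x) ^ (0+1) / ((0:ℕ) + 1) + (-x) ^ (1+1) / ((1:ℕ)+1) + Real.log (1 - -x)
              = Real.log (1 + x) - x + x ^ 2 / 2 := by push_cast; ring_nf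
          rw [e1] at htaylor
          convert htaylor using 2 <;> push_cast <;> ring
        have hEeq : E T + y ^ 2 / 2 = (T : ℝ) * (Real.log (1 + x) - x + x ^ 2 / 2) := by
          rw [hE]
          have h1 : (T : ℝ) * x = y * s := by rw [← hsq]; nlinarith [hxs]
          have h2 : (T : ℝ) * x ^ 2 = y ^ 2 := by rw [← hsq]; nlinarith [hxs]
          simp only []
          nlinarith [h1, h2]
        rw [hEeq]
        have hT0 : (0 : ℝ) ≤ (T : ℝ) := by positivity
        rw [Real.norm_eq_abs, abs_mul, abs_of_nonneg hT0]
        have hb : x ^ 3 / (1 - x) ≤ 2 * x ^ 3 := by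
          rw [div_le_iff₀ (by linarith)]
          nlinarith [pow_pos hx0 3]
        have : (T : ℝ) * |Real.log (1 + x) - x + x ^ 2 / 2| ≤ (T : ℝ) * (2 * x ^ 3) :=
          mul_le_mul_of_nonneg_left (le_trans htaylor' hb) hT0
        refine this.trans (le_of_eq ?_)
        have hTx3 : (T : ℝ) * x ^ 3 = y ^ 3 / s := by
          rw [← hsq, hx_def]; field_simp
        rw [mul_comm (2 : ℝ) (x^3), ← mul_assoc, hTx3]
        ring
      · have : Tendsto (fun T : ℕ => (Real.sqrt T)⁻¹) atTop (nhds 0) :=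
          hsqrt.inv_tendsto_atTop
        have h2 := this.const_mul (2 * y ^ 3)
        simpa [div_eq_mul_inv, mul_comm] using h2
    have := h0.sub_const (y ^ 2 / 2)
    simpa using this
  have hexp : Tendsto (fun T : ℕ => Real.exp (E T)) atTop (nhds (Real.exp (-(y ^ 2 / 2)))) :=
    (Real.continuous_exp.tendsto _).comp hEtendsto
  apply hexp.congr'
  filter_upwards [eventually_ge_atTop 1] with T hT
  have hs0 : 0 < Real.sqrt T := Real.sqrt_pos.2 (by exact_mod_cast hT)
  have h1x : 0 < 1 + y / Real.sqrt T := by positivity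
  rw [hE]
  simp only []
  rw [sub_eq_add_neg, Real.exp_add, ← Real.exp_log h1x, ← Real.exp_nat_mul, Real.exp_log h1x]

/-- `∫_0^∞ (1 + y/√T)^T e^{-y√T} dy → √(2π)/2` as `T → ∞`. -/
theorem stmt2 :
    Tendsto (fun T : ℕ => ∫ y in Set.Ioi (0 : ℝ),
        (1 + y / Real.sqrt T) ^ T * Real.exp (-(y * Real.sqrt T)))
      atTop (nhds (Real.sqrt (2 * Real.pi) / 2)) := by
  have hlim : (∫ y in Set.Ioi (0 : ℝ), Real.exp (-(y ^ 2 / 2))) = Real.sqrt (2 * Real.pi) / 2 := by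
    have := integral_gaussian_Ioi (1 / 2)
    rw [show Real.pi / (1/2) = 2 * Real.pi by ring] at this
    rw [← this]
    congr 1
    ext y
    congr 1
    ring
  rw [← hlim]
  apply tendsto_integral_filter_of_dominated_convergence
    (bound := fun y => Real.exp ((1 - y) / 2))
  · filter_upwards with T
    exact (Continuous.aestronglyMeasurable (by fun_prop))
  · filter_upwards [eventually_ge_atTop 1] with T hT
    rw [ae_restrict_iff' measurableSet_Ioi]
    filter_upwards with y hy
    have hs0 : 0 < Real.sqrt T := Real.sqrt_pos.2 (by exact_mod_cast hT)
    have h1x : (0:ℝ) < 1 + y / Real.sqrt T := by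
      have : 0 < y / Real.sqrt T := div_pos hy hs0
      linarith
    rw [Real.norm_eq_abs, abs_of_nonneg (by positivity)]
    exact my_bound T hT y hy
  · have h : (fun y : ℝ => Real.exp ((1 - y) / 2))
        = fun y => Real.exp (1 / 2) * Real.exp (-(1/2) * y) := by
      funext y
      rw [← Real.exp_add]
      congr 1
      ring
    rw [h]
    exact ((exp_neg_integrableOn_Ioi 0 (by norm_num : (0:ℝ) < 1/2)).const_mul _)
  · rw [ae_restrict_iff' measurableSet_Ioi]
    filter_upwards with y hy
    exact my_ptlim y hy
end

section
/- For each fixed y > 0, the function T ↦ (1 + y/√T)^T · e^{-y√T} is monotonically decreasing in T for T ≥ 1. -/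
/-!
Substituting `s = √T`, the exponent `T log(1 + y/√T) - y√T` becomes
`s² log(1 + y/s) - y s`, whose derivative in `s` is `2s log t - y - sy/(s+y)` with
`t = 1 + y/s`. It is nonpositive by `log t ≤ sinh (log t) = (t - t⁻¹)/2` for `t ≥ 1`.
-/

open Real Set

lemma Real.log_le_half_sub_inv {t : ℝ} (ht : 1 ≤ t) : log t ≤ (t - t⁻¹) / 2 := by
  rw [← sinh_log (by linarith)]
  exact self_le_sinh_iff.2 (log_nonneg ht)

lemma hasDerivAt_sq_mul_log_one_add_div_sub_mul {y s : ℝ} (hy : 0 ≤ y) (hs : 0 < s) :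
    HasDerivAt (fun s => s ^ 2 * log (1 + y / s) - y * s)
      (2 * s * log (1 + y / s) - s * y / (s + y) - y) s := by
  have hsy : 0 < s + y := by linarith
  have hlog : HasDerivAt (fun s => log (1 + y / s)) (-(y / s ^ 2) / (1 + y / s)) s :=
    ((hasDerivAt_inv hs.ne').const_mul y |>.const_add 1 |>.log (by positivity)).congr_deriv
      (by field_simp)
  refine (((hasDerivAt_pow 2 s).fun_mul hlog).fun_sub
    ((hasDerivAt_id' s).const_mul y)).congr_deriv ?_
  field_simp
  ring

lemma two_mul_mul_log_one_add_div_le {y s : ℝ} (hy : 0 ≤ y) (hs : 0 < s) :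
    2 * s * log (1 + y / s) ≤ s * y / (s + y) + y := by
  have hsy : 0 < s + y := by linarith
  calc 2 * s * log (1 + y / s)
      ≤ 2 * s * ((1 + y / s - (1 + y / s)⁻¹) / 2) := by
        gcongr
        exact log_le_half_sub_inv (le_add_of_nonneg_right (by positivity))
    _ = s * y / (s + y) + y := by
        field_simp
        ring

lemma antitoneOn_sq_mul_log_one_add_div_sub_mul {y : ℝ} (hy : 0 ≤ y) :
    AntitoneOn (fun s => s ^ 2 * log (1 + y / s) - y * s) (Ioi 0) := by
  refine antitoneOn_of_hasDerivWithinAt_nonpos (convex_Ioi 0)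
    (f' := fun s => 2 * s * log (1 + y / s) - s * y / (s + y) - y)
    (fun s hs => (hasDerivAt_sq_mul_log_one_add_div_sub_mul hy hs).continuousAt.continuousWithinAt)
    (fun s hs => ?_) (fun s hs => ?_) <;> rw [interior_Ioi] at hs
  · exact (hasDerivAt_sq_mul_log_one_add_div_sub_mul hy hs).hasDerivWithinAt
  · linarith [two_mul_mul_log_one_add_div_le hy hs]

/-- For fixed `y > 0`, the map `T ↦ (1 + y/√T)^T · e^{-y√T}` is
monotonically decreasing on `T ≥ 1`. -/
theorem stmt4 (y : ℝ) (hy : 0 < y) :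
    AntitoneOn (fun T : ℝ => (1 + y / Real.sqrt T) ^ T * Real.exp (-(y * Real.sqrt T)))
      (Set.Ici (1 : ℝ)) := by
  have hexp : EqOn (fun T => exp (√T ^ 2 * log (1 + y / √T) - y * √T))
      (fun T : ℝ => (1 + y / √T) ^ T * exp (-(y * √T))) (Ici 1) := by
    intro T (hT : 1 ≤ T)
    have hT0 : 0 < T := by linarith
    dsimp only
    rw [sq_sqrt hT0.le, rpow_def_of_pos (by positivity), ← exp_add, sub_eq_add_neg, mul_comm T]
  refine AntitoneOn.congr (fun a (ha : 1 ≤ a) b (hb : 1 ≤ b) hab => ?_) hexp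
  refine exp_le_exp.2 (antitoneOn_sq_mul_log_one_add_div_sub_mul hy.le ?_ ?_ (sqrt_le_sqrt hab))
  exacts [sqrt_pos.2 (by linarith), sqrt_pos.2 (by linarith)]
end

section
/- (Hoeffding for sampling without replacement) Let y_1, ..., y_T be real numbers in [0,1] with mean μ = (1/T)·Σ_t y_t, and let S be a uniformly random subset of {y_1, ..., y_T} of size s. Then for any λ > 0, P(|(1/s)·Σ_{y ∈ S} y − μ| ≥ λ) ≤ 2·exp(−s·λ²). -/
/-!
Chernoff's method reduces the tail bound to the moment generating function bound
`∑_{|S| = s} exp (u (∑_{i ∈ S} y i - s μ)) ≤ C(T, s) exp (s u² / 8)`, proved by induction on `s`.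
Counting each `(s+1)`-set once for each of its elements, an `(s+1)`-set is an element `i` followed
by an `s`-set of the remaining `T - 1` values; their mean is `μ + (μ - y i) / (T - 1)`, so the
exponent splits as `u (1 - s / (T - 1)) (y i - μ)` plus the exponent of the smaller problem.
Averaging the first factor over `i` is Hoeffding's lemma for the uniform distribution on the
population, with a parameter of absolute value at most `|u|`. Taking `u = ±4λ` then bounds each
tail by `exp (-2 s λ²)`.
-/

open Finset Real ProbabilityTheory MeasureTheory

variable {α : Type*}

theorem Fintype.sum_exp_mul_sub_average_le {ι : Type*} [Fintype ι] [Nonempty ι] (y : ι → ℝ)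
    (hy : ∀ i, y i ∈ Set.Icc (0 : ℝ) 1) (t : ℝ) :
    ∑ i, exp (t * (y i - (∑ j, y j) / Fintype.card ι)) ≤ Fintype.card ι * exp (t ^ 2 / 8) := by
  let _ : MeasurableSpace ι := ⊤
  set μ := (PMF.uniformOfFintype ι).toMeasure
  have hn : (0 : ℝ) < Fintype.card ι := by exact_mod_cast Fintype.card_pos
  have hmean : μ[y] = (∑ j, y j) / Fintype.card ι := by
    simp [μ, PMF.integral_eq_sum, Finset.mul_sum, div_eq_inv_mul]
  have h := (hasSubgaussianMGF_of_mem_Icc (μ := μ) (a := 0) (b := 1)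
    Measurable.of_discrete.aemeasurable (ae_of_all _ hy)).mgf_le t
  rw [mgf, PMF.integral_eq_sum, hmean] at h
  simp only [PMF.uniformOfFintype_apply, ENNReal.toReal_inv, ENNReal.toReal_natCast,
    smul_eq_mul, ← mul_sum, inv_mul_le_iff₀ hn] at h
  refine h.trans_eq ?_
  norm_num
  ring_nf

theorem Finset.sum_exp_mul_sub_average_le {A : Finset α} (hA : A.Nonempty) (y : α → ℝ)
    (hy : ∀ i ∈ A, y i ∈ Set.Icc (0 : ℝ) 1) (t : ℝ) :
    ∑ i ∈ A, exp (t * (y i - (∑ j ∈ A, y j) / #A)) ≤ #A * exp (t ^ 2 / 8) := by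
  have : Nonempty A := hA.to_subtype
  rw [← A.sum_coe_sort, ← A.sum_coe_sort y, ← Fintype.card_coe]
  exact Fintype.sum_exp_mul_sub_average_le (fun i : A => y i) (fun i => hy i i.2) t

theorem Finset.sum_sum_powersetCard_erase_insert [DecidableEq α] {M : Type*} [AddCommMonoid M]
    (A : Finset α) (s : ℕ) (f : Finset α → M) :
    ∑ i ∈ A, ∑ S ∈ (A.erase i).powersetCard s, f (insert i S)
      = (s + 1) • ∑ S ∈ A.powersetCard (s + 1), f S := by
  calc _ = ∑ S ∈ A.powersetCard (s + 1), ∑ _i ∈ S, f S := by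
        rw [sum_sigma', sum_sigma']
        apply sum_nbij' (fun ⟨i, S⟩ => ⟨insert i S, i⟩) (fun ⟨S, i⟩ => ⟨i, S.erase i⟩)
        all_goals
          rintro ⟨_, _⟩ h
          grind [Sigma.mk.injEq, erase_insert, insert_erase, insert_subset_iff, subset_erase]
    _ = _ := by
        rw [smul_sum]
        refine sum_congr rfl fun S hS => ?_
        rw [sum_const, (mem_powersetCard.1 hS).2]

theorem Finset.sum_insert_sub_mul_average_eq [DecidableEq α] (y : α → ℝ) {A S : Finset α}
    {i : α} {s : ℕ} (hi : i ∈ A) (hiS : i ∉ S) (hs : s < #A) :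
    ∑ j ∈ insert i S, y j - (s + 1) * ((∑ j ∈ A, y j) / #A)
      = (1 - s / (#A - 1)) * (y i - (∑ j ∈ A, y j) / #A)
        + (∑ j ∈ S, y j - s * ((∑ j ∈ A.erase i, y j) / #(A.erase i))) := by
  obtain ⟨n, hn⟩ : ∃ n, #A = n + 1 := ⟨#A - 1, by omega⟩
  have hsn : (s / n : ℝ) * n = s := by
    rcases eq_or_ne n 0 with rfl | hn0
    · simp [show s = 0 by omega]
    · field_simp
  have hmean : (∑ j ∈ A, y j) / (n + 1) * (n + 1) = y i + ∑ j ∈ A.erase i, y j := by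
    rw [add_sum_erase A y hi]
    field_simp
  rw [sum_insert hiS, card_erase_of_mem hi, hn, Nat.add_sub_cancel, Nat.cast_succ,
    add_sub_cancel_right]
  linear_combination (∑ j ∈ A, y j) / (n + 1) * hsn - s / n * hmean

theorem sum_powersetCard_exp_mul_sub_le [DecidableEq α] (y : α → ℝ) (u : ℝ) {s : ℕ}
    {A : Finset α} (hy : ∀ i ∈ A, y i ∈ Set.Icc (0 : ℝ) 1) (hs : s ≤ #A) :
    ∑ S ∈ A.powersetCard s, exp (u * (∑ i ∈ S, y i - s * ((∑ i ∈ A, y i) / #A)))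
      ≤ (#A).choose s * exp (s * (u ^ 2 / 8)) := by
  induction s generalizing A with
  | zero => simp
  | succ s ih =>
    set μ := (∑ i ∈ A, y i) / #A
    obtain ⟨n, hn⟩ : ∃ n, #A = n + 1 := ⟨#A - 1, by omega⟩
    have hA : (#A : ℝ) - 1 = n := by rw [hn]; push_cast; ring
    set c := u * (1 - s / n)
    have hc : c ^ 2 ≤ u ^ 2 := by
      have h0 : (0 : ℝ) ≤ s / n := by positivity
      have h1 : (s : ℝ) / n ≤ 1 :=
        div_le_one_of_le₀ (by exact_mod_cast (by omega : s ≤ n)) n.cast_nonneg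
      rw [mul_pow]
      exact mul_le_of_le_one_right (sq_nonneg u) (pow_le_one₀ (by linarith) (by linarith))
    set K := (n.choose s : ℝ) * exp (s * (u ^ 2 / 8))
    have hinner : ∀ i ∈ A, ∑ S ∈ (A.erase i).powersetCard s,
        exp (u * (∑ j ∈ insert i S, y j - ↑(s + 1) * μ)) ≤ exp (c * (y i - μ)) * K := by
      intro i hi
      have hcard : #(A.erase i) = n := by rw [card_erase_of_mem hi, hn, Nat.add_sub_cancel]
      have hsplit : ∀ S ∈ (A.erase i).powersetCard s,
          exp (u * (∑ j ∈ insert i S, y j - ↑(s + 1) * μ)) = exp (c * (y i - μ))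
            * exp (u * (∑ j ∈ S, y j - s * ((∑ j ∈ A.erase i, y j) / #(A.erase i)))) := by
        intro S hS
        have hiS : i ∉ S := fun h => by simpa using (mem_powersetCard.1 hS).1 h
        rw [Nat.cast_succ, sum_insert_sub_mul_average_eq y hi hiS (by omega), hA, mul_add,
          ← mul_assoc, exp_add]
      rw [sum_congr rfl hsplit, ← mul_sum]
      gcongr
      simpa only [hcard] using
        ih (fun j hj => hy j (mem_of_mem_erase hj)) (by omega : s ≤ #(A.erase i))
    have hmean : ∑ i ∈ A, exp (c * (y i - μ)) ≤ (n + 1) * exp (u ^ 2 / 8) := by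
      calc _ ≤ #A * exp (c ^ 2 / 8) := sum_exp_mul_sub_average_le (card_pos.1 (by omega)) y hy c
        _ ≤ _ := by rw [hn]; push_cast; gcongr
    have key : ((s + 1 : ℕ) : ℝ) * ∑ S ∈ A.powersetCard (s + 1),
        exp (u * (∑ i ∈ S, y i - ↑(s + 1) * μ))
          ≤ ((s + 1 : ℕ) : ℝ) * ((n + 1).choose (s + 1) * exp (↑(s + 1) * (u ^ 2 / 8))) := by
      calc _ = ∑ i ∈ A, ∑ S ∈ (A.erase i).powersetCard s,
              exp (u * (∑ j ∈ insert i S, y j - ↑(s + 1) * μ)) := by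
            rw [sum_sum_powersetCard_erase_insert A s
              fun S => exp (u * (∑ j ∈ S, y j - ↑(s + 1) * μ)), nsmul_eq_mul]
        _ ≤ ∑ i ∈ A, exp (c * (y i - μ)) * K := sum_le_sum hinner
        _ = (∑ i ∈ A, exp (c * (y i - μ))) * K := (sum_mul ..).symm
        _ ≤ ((n + 1) * exp (u ^ 2 / 8)) * K := by gcongr
        _ = _ := by
            have h : ((n + 1 : ℕ) : ℝ) * n.choose s = (n + 1).choose (s + 1) * (s + 1) := by
              exact_mod_cast Nat.add_one_mul_choose_eq n s
            push_cast at h ⊢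
            rw [add_one_mul (s : ℝ) (u ^ 2 / 8), exp_add]
            linear_combination (exp (u ^ 2 / 8) * exp (s * (u ^ 2 / 8))) * h
    rw [hn]
    exact le_of_mul_le_mul_left key (by positivity)

theorem Finset.card_filter_mul_exp_le_sum_exp {β : Type*} (P : Finset β) (g : β → ℝ) (t : ℝ) :
    #{x ∈ P | t ≤ g x} * exp t ≤ ∑ x ∈ P, exp (g x) := by
  calc _ ≤ ∑ x ∈ P with t ≤ g x, exp (g x) := by
        rw [← nsmul_eq_mul]
        exact card_nsmul_le_sum _ _ _ fun x hx => exp_le_exp.2 (mem_filter.1 hx).2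
    _ ≤ _ := sum_le_sum_of_subset_of_nonneg (filter_subset _ _) fun _ _ _ => (exp_pos _).le

theorem card_filter_le_choose_mul_exp [DecidableEq α] (y : α → ℝ) (u t : ℝ) {s : ℕ}
    {A : Finset α} (hy : ∀ i ∈ A, y i ∈ Set.Icc (0 : ℝ) 1) (hs : s ≤ #A) :
    (#{S ∈ A.powersetCard s | t ≤ u * (∑ i ∈ S, y i - s * ((∑ i ∈ A, y i) / #A))} : ℝ)
      ≤ (#A).choose s * exp (s * (u ^ 2 / 8) - t) := by
  refine ((le_div_iff₀ (exp_pos t)).2 ?_).trans_eq (by rw [exp_sub, mul_div_assoc])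
  exact (card_filter_mul_exp_le_sum_exp _ _ t).trans (sum_powersetCard_exp_mul_sub_le y u hy hs)

open Classical in
/-- Hoeffding's inequality for sampling without replacement: if `S` is a uniformly
random `s`-element subset of `{y_1, ..., y_T} ⊆ [0,1]` with mean `μ`, then
`P(|(1/s)Σ_{y∈S} y − μ| ≥ λ) ≤ 2 exp(−sλ²)`. -/
theorem stmt5 (T s : ℕ) (hs : 0 < s) (hsT : s ≤ T)
    (y : Fin T → ℝ) (hy : ∀ i, y i ∈ Set.Icc (0 : ℝ) 1)
    (lam : ℝ) (hlam : 0 < lam) :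
    (((Finset.univ.powersetCard s).filter
        (fun S : Finset (Fin T) =>
          lam ≤ |(∑ i ∈ S, y i) / (s : ℝ) - (∑ i, y i) / (T : ℝ)|)).card : ℝ)
      / ((Finset.univ.powersetCard s : Finset (Finset (Fin T))).card : ℝ)
    ≤ 2 * Real.exp (-(s : ℝ) * lam ^ 2) := by
  have hs' : (0 : ℝ) < s := by exact_mod_cast hs
  rw [card_powersetCard, card_univ, Fintype.card_fin,
    div_le_iff₀ (by exact_mod_cast Nat.choose_pos hsT)]
  set μ := (∑ i, y i) / T
  set P := (univ : Finset (Fin T)).powersetCard s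
  have htail : ∀ u : ℝ, u ^ 2 = 16 * lam ^ 2 →
      (#{S ∈ P | 4 * s * lam ^ 2 ≤ u * (∑ i ∈ S, y i - s * μ)} : ℝ)
        ≤ T.choose s * exp (-s * lam ^ 2) := by
    intro u hu
    have h := card_filter_le_choose_mul_exp y u (4 * s * lam ^ 2) (fun i _ => hy i)
      (by simpa using hsT : s ≤ #(univ : Finset (Fin T)))
    simp only [card_univ, Fintype.card_fin, hu] at h
    refine h.trans (by gcongr; nlinarith)
  have hcover : {S ∈ P | lam ≤ |(∑ i ∈ S, y i) / s - μ|}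
      ⊆ {S ∈ P | 4 * s * lam ^ 2 ≤ (4 * lam) * (∑ i ∈ S, y i - s * μ)}
        ∪ {S ∈ P | 4 * s * lam ^ 2 ≤ (-(4 * lam)) * (∑ i ∈ S, y i - s * μ)} := by
    intro S hS
    simp only [mem_union, mem_filter] at hS ⊢
    have hdev : ∑ i ∈ S, y i - s * μ = s * ((∑ i ∈ S, y i) / s - μ) := by field_simp
    rw [hdev]
    have h4 : (0 : ℝ) ≤ 4 * lam * s := by positivity
    rcases le_abs'.1 hS.2 with h | h
    · exact .inr ⟨hS.1, by nlinarith [mul_le_mul_of_nonneg_left h h4]⟩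
    · exact .inl ⟨hS.1, by nlinarith [mul_le_mul_of_nonneg_left h h4]⟩
  calc _ ≤ (#{S ∈ P | 4 * s * lam ^ 2 ≤ (4 * lam) * (∑ i ∈ S, y i - s * μ)}
        + #{S ∈ P | 4 * s * lam ^ 2 ≤ (-(4 * lam)) * (∑ i ∈ S, y i - s * μ)} : ℝ) := by
        exact_mod_cast (card_le_card hcover).trans (card_union_le _ _)
    _ ≤ _ := by linarith [htail (4 * lam) (by ring), htail (-(4 * lam)) (by ring)]
end

section
/- Let x* be an optimal solution of the LP: maximize ⟨r̄, x⟩ over x in the probability simplex Δ_k subject to ⟨c̄_j, x⟩ ≤ ρ for all j ∈ [m]. Let (r̄^p, c̄^p_j) satisfy ‖r̄ − r̄^p‖_∞ ≤ ε and ‖c̄_j − c̄^p_j‖_∞ ≤ ε for all j, and suppose there is a null action ∅ with c̄^p_j(∅) = 0 and r̄^p(∅) ≥ 0 for all j. Let OPT be the value of the original LP and OPT' the value of the perturbed LP: maximize ⟨r̄^p, x⟩ over x ∈ Δ_k subject to ⟨c̄^p_j, x⟩ ≤ ρ − 2ε. If ρ > 2ε > 0 then OPT − OPT' ≤ ε·(1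 + 3/ρ). -/
/-- Sensitivity of the constrained LP value: if the rewards and costs are
perturbed by at most `ε` in sup-norm, there is a zero-cost action, and the
budget is shrunk from `ρ` to `ρ − 2ε`, then the optimal value decreases by at
most `ε(1 + 3/ρ)`. -/
theorem stmt7 (k m : ℕ) (ρ ε : ℝ) (hε : 0 < ε) (hρ : 2 * ε < ρ)
    (r rp : Fin k → ℝ) (c cp : Fin m → Fin k → ℝ)
    (hr : ∀ a, r a ∈ Set.Icc (0 : ℝ) 1) (hrp : ∀ a, rp a ∈ Set.Icc (0 : ℝ) 1)
    (hc : ∀ j a, c j a ∈ Set.Icc (0 : ℝ) 1) (hcp : ∀ j a, cp j a ∈ Set.Icc (0 : ℝ) 1)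
    (hre : ∀ a, |r a - rp a| ≤ ε) (hce : ∀ j a, |c j a - cp j a| ≤ ε)
    (nullAct : Fin k) (hnullc : ∀ j, cp j nullAct = 0) (hnullr : 0 ≤ rp nullAct)
    (xs : Fin k → ℝ) (hxs : xs ∈ stdSimplex ℝ (Fin k))
    (hxsf : ∀ j, ∑ a, c j a * xs a ≤ ρ)
    (hxsopt : ∀ x ∈ stdSimplex ℝ (Fin k),
      (∀ j, ∑ a, c j a * x a ≤ ρ) → ∑ a, r a * x a ≤ ∑ a, r a * xs a)
    (xi : Fin k → ℝ) (hxi : xi ∈ stdSimplex ℝ (Fin k))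
    (hxif : ∀ j, ∑ a, cp j a * xi a ≤ ρ - 2 * ε)
    (hxiopt : ∀ x ∈ stdSimplex ℝ (Fin k),
      (∀ j, ∑ a, cp j a * x a ≤ ρ - 2 * ε) → ∑ a, rp a * x a ≤ ∑ a, rp a * xi a) :
    (∑ a, r a * xs a) - (∑ a, rp a * xi a) ≤ ε * (1 + 3 / ρ) := by
  obtain ⟨hxs0, hxs1⟩ := hxs
  have hρ0 : (0:ℝ) < ρ := lt_trans (by linarith) hρ
  have hρε : (0:ℝ) < ρ + ε := by linarith
  set β : ℝ := (ρ - 2*ε) / (ρ + ε) with hβdef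
  have hβ0 : 0 ≤ β := div_nonneg (by linarith) (by linarith)
  have hβ1 : β ≤ 1 := by rw [hβdef, div_le_one hρε]; linarith
  have hβeq : β * (ρ + ε) = ρ - 2*ε := div_mul_cancel₀ _ (ne_of_gt hρε)
  set x : Fin k → ℝ := fun a => β * xs a + (1-β) * (if a = nullAct then 1 else 0)
    with hxdef
  have hsum : ∀ v : Fin k → ℝ,
      ∑ a, v a * x a = β * (∑ a, v a * xs a) + (1-β) * v nullAct := by
    intro v
    have h : ∀ a, v a * x a
        = β * (v a * xs a) + (1-β) * (if a = nullAct then v nullAct else 0) := by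
      intro a
      simp only [hxdef]
      by_cases h : a = nullAct
      · subst h; simp; ring
      · simp [h]; ring
    simp only [h, Finset.sum_add_distrib, ← Finset.mul_sum,
      Finset.sum_ite_eq' Finset.univ nullAct (fun _ => v nullAct), Finset.mem_univ,
      if_true]
  have hxmem : x ∈ stdSimplex ℝ (Fin k) := by
    constructor
    · intro a
      have h1 : 0 ≤ β * xs a := mul_nonneg hβ0 (hxs0 a)
      have h2 : 0 ≤ (1-β) * (if a = nullAct then (1:ℝ) else 0) := by
        apply mul_nonneg (by linarith); split <;> norm_num
      simp only [hxdef]; linarith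
    · have := hsum (fun _ => 1)
      simp only [one_mul] at this
      rw [this, hxs1]; ring
  -- feasibility of x for the perturbed program
  have hxfeas : ∀ j, ∑ a, cp j a * x a ≤ ρ - 2 * ε := by
    intro j
    have hb : ∑ a, cp j a * xs a ≤ ρ + ε := by
      have h1 : ∑ a, cp j a * xs a ≤ ∑ a, (c j a + ε) * xs a := by
        apply Finset.sum_le_sum
        intro a _
        apply mul_le_mul_of_nonneg_right _ (hxs0 a)
        have := abs_le.mp (hce j a)
        linarith [this.1]
      have h2 : ∑ a, (c j a + ε) * xs a = (∑ a, c j a * xs a) + ε := by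
        simp only [add_mul, Finset.sum_add_distrib, ← Finset.mul_sum, hxs1, mul_one]
      have := hxsf j
      linarith
    rw [hsum (cp j), hnullc j, mul_zero, add_zero, ← hβeq]
    exact mul_le_mul_of_nonneg_left hb hβ0
  -- reward of x
  have hR1 : ∑ a, r a * xs a ≤ 1 := by
    calc ∑ a, r a * xs a ≤ ∑ a, 1 * xs a := by
          apply Finset.sum_le_sum
          intro a _
          exact mul_le_mul_of_nonneg_right (hr a).2 (hxs0 a)
      _ = 1 := by simp [hxs1]
  have hRrp : (∑ a, r a * xs a) - ε ≤ ∑ a, rp a * xs a := by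
    have h1 : ∑ a, r a * xs a ≤ ∑ a, (rp a + ε) * xs a := by
      apply Finset.sum_le_sum
      intro a _
      apply mul_le_mul_of_nonneg_right _ (hxs0 a)
      have := abs_le.mp (hre a)
      linarith [this.2]
    have h2 : ∑ a, (rp a + ε) * xs a = (∑ a, rp a * xs a) + ε := by
      simp only [add_mul, Finset.sum_add_distrib, ← Finset.mul_sum, hxs1, mul_one]
    linarith
  have hlow : β * ((∑ a, r a * xs a) - ε) ≤ ∑ a, rp a * xi a := by
    have h1 := hxiopt x hxmem hxfeas
    rw [hsum rp] at h1
    have h2 : 0 ≤ (1-β) * rp nullAct := mul_nonneg (by linarith) hnullr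
    have h3 : β * ((∑ a, r a * xs a) - ε) ≤ β * ∑ a, rp a * xs a :=
      mul_le_mul_of_nonneg_left hRrp hβ0
    linarith
  -- conclude
  have h1mβ : (1 - β) * (ρ + ε) = 3 * ε := by
    have : (1 - β) * (ρ + ε) = (ρ + ε) - β * (ρ + ε) := by ring
    rw [this, hβeq]; ring
  have h1mβle : 1 - β ≤ 3 * ε / ρ := by
    rw [le_div_iff₀ hρ0]
    nlinarith [mul_nonneg (sub_nonneg.mpr hβ1) hε.le]
  have hR0 : 0 ≤ ∑ a, r a * xs a :=
    Finset.sum_nonneg fun a _ => mul_nonneg (hr a).1 (hxs0 a)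
  have key : (∑ a, r a * xs a) - (∑ a, rp a * xi a)
      ≤ (1 - β) * (∑ a, r a * xs a) + β * ε := by
    have := hlow; nlinarith
  have h2 : (1 - β) * (∑ a, r a * xs a) ≤ 3 * ε / ρ := by
    calc (1 - β) * (∑ a, r a * xs a) ≤ (1 - β) * 1 :=
          mul_le_mul_of_nonneg_left hR1 (by linarith)
      _ = 1 - β := mul_one _
      _ ≤ 3 * ε / ρ := h1mβle
  have h3 : β * ε ≤ ε := by nlinarith
  have h4 : ε * (1 + 3 / ρ) = ε + 3 * ε / ρ := by field_simp
  linarith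
end
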